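/- arXiv:2504.00130 — 2 statements merged into one kernel-verified Lean document; each statement's English description precedes it below -/
import Mathlib

section
/- Let Z = {c_z + G_z ξ : ξ ∈ ℝ^{n_g}, ‖ξ‖_∞ ≤ 1, A_z ξ = b_z} ⊂ ℝ^n and Y = {c_y + G_y η : η ∈ ℝ^{m_g}, ‖η‖_∞ ≤ 1, A_y η = b_y} ⊂ ℝ^m be constrained zonotopes and R ∈ ℝ^{m×n} a matrix. Then the generalized intersection satisfies Z ∩_R Y = {c_z + [G_z 0](ξ, η) : (ξ, η) ∈ ℝ^{n_g + m_g}, ‖(ξ, η)‖_∞ ≤ 1, A_z ξ = b_z, A_y η = b_y, R G_z ξ − G_y η = c_y − R c_z}, i.e., Z ∩_R Y is the constrained zonotope with generator matrix [G_z 0], center c_z, and constraints A_z ξ = b_z, A_y η = b_y, and R G_z ξ − G_y η = c_y − R c_z. -/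
open Matrix

/-- Generalized intersection of constrained zonotopes: Z ∩_R Y is the constrained
zonotope with generator matrix [Gz 0], center cz, and constraints
Az ξ = bz, Ay η = by, and R Gz ξ − Gy η = cy − R cz. -/
theorem cz_generalized_intersection {n m ng mg ncz ncy : ℕ}
    (Gz : Matrix (Fin n) (Fin ng) ℝ) (cz : Fin n → ℝ)
    (Az : Matrix (Fin ncz) (Fin ng) ℝ) (bz : Fin ncz → ℝ)
    (Gy : Matrix (Fin m) (Fin mg) ℝ) (cy : Fin m → ℝ)
    (Ay : Matrix (Fin ncy) (Fin mg) ℝ) (by' : Fin ncy → ℝ)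
    (R : Matrix (Fin m) (Fin n) ℝ) :
    {z ∈ {x : Fin n → ℝ | ∃ ξ : Fin ng → ℝ,
        ‖ξ‖ ≤ 1 ∧ Az *ᵥ ξ = bz ∧ x = cz + Gz *ᵥ ξ} |
      R *ᵥ z ∈ {x : Fin m → ℝ | ∃ η : Fin mg → ℝ,
        ‖η‖ ≤ 1 ∧ Ay *ᵥ η = by' ∧ x = cy + Gy *ᵥ η}} =
    {x : Fin n → ℝ | ∃ ξη : (Fin ng → ℝ) × (Fin mg → ℝ), ‖ξη‖ ≤ 1 ∧
        Az *ᵥ ξη.1 = bz ∧ Ay *ᵥ ξη.2 = by' ∧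
        (R * Gz) *ᵥ ξη.1 - Gy *ᵥ ξη.2 = cy - R *ᵥ cz ∧
        x = cz + Gz *ᵥ ξη.1} := by
  ext x
  simp only [Set.mem_setOf_eq, Set.mem_sep_iff]
  constructor
  · rintro ⟨⟨ξ, hξ, hAz, rfl⟩, η, hη, hAy, hEq⟩
    refine ⟨(ξ, η), ?_, hAz, hAy, ?_, rfl⟩
    · rw [Prod.norm_def]; exact max_le hξ hη
    · have := hEq
      rw [mulVec_add, mulVec_mulVec] at this
      rw [sub_eq_sub_iff_add_eq_add, add_comm]
      exact this
  · rintro ⟨⟨ξ, η⟩, hnorm, hAz, hAy, hc, rfl⟩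
    rw [Prod.norm_def] at hnorm
    refine ⟨⟨ξ, le_trans (le_max_left _ _) hnorm, hAz, rfl⟩,
      η, le_trans (le_max_right _ _) hnorm, hAy, ?_⟩
    rw [mulVec_add, mulVec_mulVec]
    rw [sub_eq_sub_iff_add_eq_add] at hc
    rw [add_comm]
    exact hc
end

section
/- (Equivalence of the full and reduced enclosures.) Let P = {(z_e, z_r) ∈ ℝ^{n_e} × ℝ^{n_r} : H_e z_e + H_r z_r ≤ k, A_ee z_e + A_er z_r = b_e, A_re z_e + A_rr z_r = b_r} with A_ee invertible, and let P̊ = {z_r ∈ ℝ^{n_r} : (H_r − H_e A_ee^{−1} A_er) z_r ≤ k − H_e A_ee^{−1} b_e, (A_rr − A_re A_ee^{−1} A_er) z_r = b_r − A_re A_ee^{−1} b_e}. Let D_r ⊆ ℝ^{n_r} and Z_e ⊆ ℝ^{n_e} be sets such that for every z_r ∈ D_r one has A_ee^{−1}(b_e − A_er z_r) ∈ Z_e. Let E_e ∈ ℝ^{n_x × n_e} and E_r ∈ ℝ^{n_x × n_r}, and define G_f = E_r − E_e A_ee^{−1} A_er and c_f = E_e A_ee^{−1} b_e. Then {E_e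 z_e + E_r z_r : (z_e, z_r) ∈ (Z_e × D_r) ∩ P} = {G_f z_r + c_f : z_r ∈ D_r ∩ P̊}. -/
open Matrix

private lemma subst_lemma {ne nr m : ℕ}
    (Aee : Matrix (Fin ne) (Fin ne) ℝ) (Aer : Matrix (Fin ne) (Fin nr) ℝ)
    (be : Fin ne → ℝ) (zr : Fin nr → ℝ)
    (M : Matrix (Fin m) (Fin ne) ℝ) (N : Matrix (Fin m) (Fin nr) ℝ) :
    M *ᵥ (Aee⁻¹ *ᵥ (be - Aer *ᵥ zr)) + N *ᵥ zr =
      (N - M * Aee⁻¹ * Aer) *ᵥ zr + M *ᵥ (Aee⁻¹ *ᵥ be) := by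
  simp only [Matrix.mulVec_sub, Matrix.sub_mulVec, Matrix.mulVec_mulVec, Matrix.mul_assoc]
  abel

/-- Equivalence of the full and reduced enclosures: projecting the intersection
with the full lifted polyhedron through E equals the affine image of the
intersection with the reduced polyhedron. -/
theorem full_reduced_enclosure_equiv {ne nr nh ncr nx : ℕ}
    (He : Matrix (Fin nh) (Fin ne) ℝ) (Hr : Matrix (Fin nh) (Fin nr) ℝ)
    (k : Fin nh → ℝ)
    (Aee : Matrix (Fin ne) (Fin ne) ℝ) (Aer : Matrix (Fin ne) (Fin nr) ℝ)
    (be : Fin ne → ℝ)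
    (Are : Matrix (Fin ncr) (Fin ne) ℝ) (Arr : Matrix (Fin ncr) (Fin nr) ℝ)
    (br : Fin ncr → ℝ)
    (hA : IsUnit Aee)
    (P : Set ((Fin ne → ℝ) × (Fin nr → ℝ)))
    (hP : P = {z | He *ᵥ z.1 + Hr *ᵥ z.2 ≤ k ∧
        Aee *ᵥ z.1 + Aer *ᵥ z.2 = be ∧ Are *ᵥ z.1 + Arr *ᵥ z.2 = br})
    (Pr : Set (Fin nr → ℝ))
    (hPr : Pr = {zr | (Hr - He * Aee⁻¹ * Aer) *ᵥ zr ≤ k - He *ᵥ (Aee⁻¹ *ᵥ be) ∧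
        (Arr - Are * Aee⁻¹ * Aer) *ᵥ zr = br - Are *ᵥ (Aee⁻¹ *ᵥ be)})
    (Dr : Set (Fin nr → ℝ)) (Ze : Set (Fin ne → ℝ))
    (hZe : ∀ zr ∈ Dr, Aee⁻¹ *ᵥ (be - Aer *ᵥ zr) ∈ Ze)
    (Ee : Matrix (Fin nx) (Fin ne) ℝ) (Er : Matrix (Fin nx) (Fin nr) ℝ)
    (Gf : Matrix (Fin nx) (Fin nr) ℝ) (cf : Fin nx → ℝ)
    (hGf : Gf = Er - Ee * Aee⁻¹ * Aer) (hcf : cf = Ee *ᵥ (Aee⁻¹ *ᵥ be)) :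
    {x : Fin nx → ℝ | ∃ z ∈ (Ze ×ˢ Dr) ∩ P, x = Ee *ᵥ z.1 + Er *ᵥ z.2} =
    {x : Fin nx → ℝ | ∃ zr ∈ Dr ∩ Pr, x = Gf *ᵥ zr + cf} := by
  have hdet := (Matrix.isUnit_iff_isUnit_det Aee).mp hA
  have hinv : Aee⁻¹ * Aee = 1 := Matrix.nonsing_inv_mul Aee hdet
  have hinv2 : Aee * Aee⁻¹ = 1 := Matrix.mul_nonsing_inv Aee hdet
  ext x
  simp only [Set.mem_setOf_eq, hP, hPr, Set.mem_inter_iff, Set.mem_prod, Prod.exists]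
  constructor
  · rintro ⟨ze, zr, ⟨⟨hze, hzr⟩, hle, heq, heq2⟩, rfl⟩
    have hz : ze = Aee⁻¹ *ᵥ (be - Aer *ᵥ zr) := by
      have h1 : Aee *ᵥ ze = be - Aer *ᵥ zr := by
        rw [eq_sub_iff_add_eq]; exact heq
      calc ze = (Aee⁻¹ * Aee) *ᵥ ze := by rw [hinv, Matrix.one_mulVec]
        _ = Aee⁻¹ *ᵥ (Aee *ᵥ ze) := by rw [← Matrix.mulVec_mulVec]
        _ = Aee⁻¹ *ᵥ (be - Aer *ᵥ zr) := by rw [h1]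
    subst hz
    refine ⟨zr, ⟨hzr, ?_, ?_⟩, ?_⟩
    · have := subst_lemma Aee Aer be zr He Hr
      rw [le_sub_iff_add_le, ← this]
      exact hle
    · have := subst_lemma Aee Aer be zr Are Arr
      rw [eq_sub_iff_add_eq, ← this]
      exact heq2
    · rw [hGf, hcf, ← subst_lemma Aee Aer be zr Ee Er]
  · rintro ⟨zr, ⟨hzr, hle, heq2⟩, rfl⟩
    refine ⟨Aee⁻¹ *ᵥ (be - Aer *ᵥ zr), zr, ⟨⟨hZe zr hzr, hzr⟩, ?_, ?_, ?_⟩, ?_⟩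
    · rw [subst_lemma Aee Aer be zr He Hr, ← le_sub_iff_add_le]
      exact hle
    · rw [Matrix.mulVec_mulVec, hinv2, Matrix.one_mulVec, sub_add_cancel]
    · rw [subst_lemma Aee Aer be zr Are Arr, ← eq_sub_iff_add_eq]
      exact heq2
    · rw [subst_lemma Aee Aer be zr Ee Er, hGf, hcf]
end
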